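/- The identity map from ([0, 2^10), D) to ([0, 2^10), Δ), where D is the digit-based metric and Δ is the Euclidean distance, is continuous. Equivalently, if D(x^n, x) → 0 then |x^n - x| → 0. -/

import Mathlib

/-! The integral part of a point is encoded by its ten binary digits, so `D y x < 1` forces
`⌊y⌋ = ⌊x⌋`. The decimal digits of `Int.fract x` sum to `Int.fract x`, hence the difference of
two fractional parts is bounded by the weighted digit distance. Together, `|y - x| ≤ D(y, x)`
as soon as `D(y, x) < 1`. -/

open Finset

/-- k-th binary digit (from the left, with 10 bits) of the integral part of x. -/
noncomputable def ebit (x : ℝ) (k : ℕ) : ℕ := (Int.toNat ⌊x⌋) / 2 ^ (9 - k) % 2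

/-- k-th decimal digit of the fractional part of x (floor-based expansion,
which never ends in an infinite tail of 9's). -/
noncomputable def sdig (x : ℝ) (k : ℕ) : ℕ := Int.toNat ⌊Int.fract x * 10 ^ (k + 1)⌋ % 10

/-- Hamming distance between the binary digits of the integral parts. -/
noncomputable def De (x y : ℝ) : ℝ :=
  ∑ k ∈ Finset.range 10, (if ebit x k = ebit y k then (0 : ℝ) else 1)

/-- Weighted distance between the decimal digit sequences of the fractional parts. -/
noncomputable def Ds (x y : ℝ) : ℝ :=
  ∑' k : ℕ, |(sdig x k : ℝ) - (sdig y k : ℝ)| / 10 ^ (k + 1)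

/-- The digit-based distance D. -/
noncomputable def Dd (x y : ℝ) : ℝ := De x y + Ds x y

lemma Nat.eq_of_lt_two_pow_of_div_two_pow_mod_two_eq {m n w : ℕ} (hm : m < 2 ^ w)
    (hn : n < 2 ^ w) (h : ∀ i < w, m / 2 ^ i % 2 = n / 2 ^ i % 2) : m = n := by
  refine Nat.eq_of_testBit_eq fun i => ?_
  rcases lt_or_ge i w with hi | hi
  · simp only [Nat.testBit_eq_decide_div_mod_eq, h i hi]
  · have hpow : 2 ^ w ≤ 2 ^ i := Nat.pow_le_pow_right (by norm_num) hi
    rw [Nat.testBit_lt_two_pow (hm.trans_le hpow), Nat.testBit_lt_two_pow (hn.trans_le hpow)]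

lemma Nat.floor_mul_pow_succ_div {K : Type*} [Semifield K] [LinearOrder K] [IsStrictOrderedRing K]
    [FloorSemiring K] (a : K) {b : ℕ} (hb : b ≠ 0) (k : ℕ) :
    ⌊a * b ^ (k + 1)⌋₊ / b = ⌊a * b ^ k⌋₊ := by
  rw [← Nat.floor_div_natCast, pow_succ, ← mul_assoc,
    mul_div_cancel_right₀ _ (Nat.cast_ne_zero.2 hb)]

lemma De_nonneg (x y : ℝ) : 0 ≤ De x y :=
  sum_nonneg fun k _ => by split_ifs <;> norm_num

lemma ebit_eq_of_De_lt_one {x y : ℝ} (h : De x y < 1) {k : ℕ} (hk : k < 10) :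
    ebit x k = ebit y k := by
  by_contra hne
  have : (1 : ℝ) ≤ De x y := by
    simpa [De, hne] using single_le_sum (f := fun j => if ebit x j = ebit y j then (0 : ℝ) else 1)
      (fun j _ => by split_ifs <;> norm_num) (mem_range.2 hk)
  linarith

lemma floor_eq_of_De_lt_one {x y : ℝ} (hx : x ∈ Set.Ico (0 : ℝ) (2 ^ 10))
    (hy : y ∈ Set.Ico (0 : ℝ) (2 ^ 10)) (h : De x y < 1) : ⌊x⌋ = ⌊y⌋ := by
  have hbits : ⌊x⌋₊ = ⌊y⌋₊ := by
    refine Nat.eq_of_lt_two_pow_of_div_two_pow_mod_two_eq (w := 10)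
      ((Nat.floor_lt hx.1).2 (by exact_mod_cast hx.2))
      ((Nat.floor_lt hy.1).2 (by exact_mod_cast hy.2)) fun i hi => ?_
    have := ebit_eq_of_De_lt_one h (k := 9 - i) (by omega)
    rwa [ebit, ebit, Int.floor_toNat, Int.floor_toNat, show 9 - (9 - i) = i by omega] at this
  rw [← Int.natCast_floor_eq_floor hx.1, ← Int.natCast_floor_eq_floor hy.1, hbits]

lemma sdig_add_ten_mul_floor (x : ℝ) (k : ℕ) :
    sdig x k + 10 * ⌊Int.fract x * 10 ^ k⌋₊ = ⌊Int.fract x * 10 ^ (k + 1)⌋₊ := by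
  have := Nat.floor_mul_pow_succ_div (Int.fract x) (b := 10) (by norm_num) k
  push_cast at this
  rw [sdig, Int.floor_toNat, ← this, Nat.mod_add_div]

lemma sum_range_sdig_div (x : ℝ) (n : ℕ) :
    ∑ k ∈ range n, (sdig x k : ℝ) / 10 ^ (k + 1) = ⌊Int.fract x * 10 ^ n⌋₊ / 10 ^ n := by
  induction n with
  | zero => simp [Nat.floor_eq_zero.2 (Int.fract_lt_one x)]
  | succ n ih =>
    have hdig : (sdig x n : ℝ) = ⌊Int.fract x * 10 ^ (n + 1)⌋₊ - 10 * ⌊Int.fract x * 10 ^ n⌋₊ := by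
      rw [← sdig_add_ten_mul_floor]; push_cast; ring
    rw [sum_range_succ, ih, hdig]
    field_simp
    ring

lemma hasSum_sdig (x : ℝ) : HasSum (fun k => (sdig x k : ℝ) / 10 ^ (k + 1)) (Int.fract x) := by
  refine (hasSum_iff_tendsto_nat_of_nonneg (fun k => by positivity) _).2 ?_
  simp only [sum_range_sdig_div]
  exact (tendsto_nat_floor_mul_div_atTop (Int.fract_nonneg x)).comp
    (tendsto_pow_atTop_atTop_of_one_lt (by norm_num))

lemma Ds_nonneg (x y : ℝ) : 0 ≤ Ds x y :=
  tsum_nonneg fun k => by positivity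

lemma abs_fract_sub_fract_le_Ds (x y : ℝ) : |Int.fract x - Int.fract y| ≤ Ds x y := by
  have hsub := (hasSum_sdig x).sub (hasSum_sdig y)
  calc |Int.fract x - Int.fract y|
      = ‖∑' k, ((sdig x k : ℝ) / 10 ^ (k + 1) - (sdig y k : ℝ) / 10 ^ (k + 1))‖ := by
        rw [hsub.tsum_eq, Real.norm_eq_abs]
    _ ≤ ∑' k, ‖(sdig x k : ℝ) / 10 ^ (k + 1) - (sdig y k : ℝ) / 10 ^ (k + 1)‖ :=
        norm_tsum_le_tsum_norm hsub.summable.norm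
    _ = Ds x y := tsum_congr fun k => by
        rw [Real.norm_eq_abs, ← sub_div, abs_div,
          abs_of_pos (a := (10 : ℝ) ^ (k + 1)) (by positivity)]

lemma abs_sub_le_Dd_of_De_lt_one {x y : ℝ} (hx : x ∈ Set.Ico (0 : ℝ) (2 ^ 10))
    (hy : y ∈ Set.Ico (0 : ℝ) (2 ^ 10)) (h : De x y < 1) : |x - y| ≤ Dd x y := by
  have hfract : x - y = Int.fract x - Int.fract y := by
    rw [Int.fract, Int.fract, floor_eq_of_De_lt_one hx hy h]; ring
  rw [hfract, Dd]
  linarith [abs_fract_sub_fract_le_Ds x y, De_nonneg x y]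

/-- The identity map from ([0, 2^10), D) to ([0, 2^10), Δ) is continuous. -/
theorem stmt2 :
    ∀ x ∈ Set.Ico (0 : ℝ) (2 ^ 10), ∀ ε > (0 : ℝ), ∃ δ > (0 : ℝ),
      ∀ y ∈ Set.Ico (0 : ℝ) (2 ^ 10), Dd y x < δ → |y - x| < ε := by
  intro x hx ε hε
  refine ⟨min 1 ε, lt_min one_pos hε, fun y hy hD => ?_⟩
  have hDe : De y x < 1 := by
    have := Ds_nonneg y x
    have := hD.trans_le (min_le_left _ _)
    rw [Dd] at this
    linarith
  exact (abs_sub_le_Dd_of_De_lt_one hy hx hDe).trans_lt (hD.trans_le (min_le_right _ _))
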